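/- arXiv:1905.10194 — 9 statements merged into one kernel-verified Lean document; each statement's English description precedes it below -/
import Mathlib

section
/- Let ℓ : ℝ^n → ℝ be differentiable, μ-strongly convex and L-smooth with 0 < μ ≤ L, and let w* be its global minimizer. Let w ∈ ℝ^n with w ≠ w*, and let g ∈ ℝ^n be a nonzero estimated gradient whose gradient estimation angle satisfies ∠(g, ∇ℓ(w)) + arccos√(μ/L) ≤ θ for some θ < π/2. Then there exists a learning rate η > 0 such that ‖(w − η·g) − w*‖ ≤ sin(θ)·‖w − w*‖. -/
/-!
Let `v = w - w⋆`. Comparing the smoothness upper bound at `w - ∇ℓ(w)/L` with the minimum value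
gives `‖∇ℓ(w)‖² ≤ 2L(ℓ w - ℓ w⋆)`, and strong convexity gives
`⟪∇ℓ(w), v⟫ ≥ ℓ w - ℓ w⋆ + μ/2 ‖v‖²`; by AM-GM these combine to
`⟪∇ℓ(w), v⟫ ≥ √(μ/L) ‖∇ℓ(w)‖ ‖v‖`, i.e. the angle between `∇ℓ(w)` and `v` is at most the
convex-smooth angle. The triangle inequality for angles then bounds `∠(g, v)` by `θ`, and
the step that projects `v` onto the line through `g` leaves a residual of norm
`sin ∠(g, v) · ‖v‖ ≤ sin θ · ‖v‖`.
-/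

open InnerProductGeometry RealInnerProductSpace

namespace InnerProductGeometry

variable {V : Type*} [NormedAddCommGroup V] [InnerProductSpace ℝ V]

theorem angle_le_arccos_of_mul_norm_mul_norm_le_inner {x y : V} {c : ℝ} (hx : x ≠ 0)
    (hy : y ≠ 0) (h : c * (‖x‖ * ‖y‖) ≤ ⟪x, y⟫) : angle x y ≤ Real.arccos c :=
  Real.arccos_le_arccos ((le_div_iff₀ (by positivity)).mpr h)

theorem norm_sub_inner_div_norm_sq_smul (g v : V) :
    ‖v - (⟪g, v⟫ / ‖g‖ ^ 2) • g‖ = Real.sin (angle g v) * ‖v‖ := by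
  rcases eq_or_ne g 0 with rfl | hg
  · simp
  have hg' : 0 < ‖g‖ := norm_pos_iff.mpr hg
  have hcos := cos_angle_mul_norm_mul_norm g v
  refine (sq_eq_sq₀ (norm_nonneg _) (mul_nonneg (sin_angle_nonneg g v) (norm_nonneg v))).mp ?_
  rw [norm_sub_sq_real, real_inner_smul_right, norm_smul, Real.norm_eq_abs, mul_pow, sq_abs,
    real_inner_comm g v, mul_pow, Real.sin_sq, ← hcos]
  field_simp
  ring

theorem exists_pos_norm_sub_smul_le_sin_mul {g v : V} {θ : ℝ} (hg : g ≠ 0) (hv : v ≠ 0)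
    (hθ : θ < Real.pi / 2) (hangle : angle g v ≤ θ) :
    ∃ η : ℝ, 0 < η ∧ ‖v - η • g‖ ≤ Real.sin θ * ‖v‖ := by
  have hcos : 0 < Real.cos (angle g v) :=
    Real.cos_pos_of_mem_Ioo ⟨by linarith [angle_nonneg g v, Real.pi_pos], by linarith⟩
  have hinner : 0 < ⟪g, v⟫ := by
    rw [← cos_angle_mul_norm_mul_norm]
    have := norm_pos_iff.mpr hg
    have := norm_pos_iff.mpr hv
    positivity
  refine ⟨⟪g, v⟫ / ‖g‖ ^ 2, by positivity, ?_⟩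
  rw [norm_sub_inner_div_norm_sq_smul]
  gcongr
  exact Real.sin_le_sin_of_le_of_le_pi_div_two (by linarith [angle_nonneg g v]) hθ.le hangle

end InnerProductGeometry

section StronglyConvexSmooth

variable {E : Type*} [NormedAddCommGroup E] [InnerProductSpace ℝ E] [CompleteSpace E]
  {f : E → ℝ} {μ L : ℝ} {m : E}

theorem norm_sq_gradient_le_of_smooth (hL : 0 < L)
    (hsm : ∀ a b : E, f b ≤ f a + ⟪gradient f a, b - a⟫ + L / 2 * ‖b - a‖ ^ 2)
    (hmin : ∀ x, f m ≤ f x) (a : E) : ‖gradient f a‖ ^ 2 ≤ 2 * L * (f a - f m) := by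
  have hstep : f m ≤ f a - ‖gradient f a‖ ^ 2 / (2 * L) := by
    calc f m ≤ f (a - L⁻¹ • gradient f a) := hmin _
      _ ≤ f a + ⟪gradient f a, -(L⁻¹ • gradient f a)⟫
            + L / 2 * ‖-(L⁻¹ • gradient f a)‖ ^ 2 := by
        simpa only [sub_sub_cancel_left] using hsm a (a - L⁻¹ • gradient f a)
      _ = f a - ‖gradient f a‖ ^ 2 / (2 * L) := by
        rw [inner_neg_right, real_inner_smul_right, real_inner_self_eq_norm_sq, norm_neg,
          norm_smul, Real.norm_eq_abs, abs_of_pos (inv_pos.mpr hL)]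
        field_simp
        ring
  have hdiv : ‖gradient f a‖ ^ 2 / (2 * L) ≤ f a - f m := by linarith
  rwa [div_le_iff₀ (by positivity), mul_comm] at hdiv

theorem le_inner_gradient_sub_of_stronglyConvex
    (hsc : ∀ a b : E, f a + ⟪gradient f a, b - a⟫ + μ / 2 * ‖b - a‖ ^ 2 ≤ f b)
    (w : E) : f w - f m + μ / 2 * ‖w - m‖ ^ 2 ≤ ⟪gradient f w, w - m⟫ := by
  have h := hsc w m
  rw [← neg_sub w m, inner_neg_right, norm_neg] at h
  linarith

theorem sqrt_div_mul_norm_mul_norm_le_inner_gradient (hμ : 0 ≤ μ) (hL : 0 < L)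
    (hsc : ∀ a b : E, f a + ⟪gradient f a, b - a⟫ + μ / 2 * ‖b - a‖ ^ 2 ≤ f b)
    (hsm : ∀ a b : E, f b ≤ f a + ⟪gradient f a, b - a⟫ + L / 2 * ‖b - a‖ ^ 2)
    (hmin : ∀ x, f m ≤ f x) (w : E) :
    √(μ / L) * (‖gradient f w‖ * ‖w - m‖) ≤ ⟪gradient f w, w - m⟫ := by
  set s := √(μ / L)
  have hs : s ^ 2 * L = μ := by rw [Real.sq_sqrt (by positivity)]; field_simp
  have hgrad := norm_sq_gradient_le_of_smooth hL hsm hmin w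
  have hinner := le_inner_gradient_sub_of_stronglyConvex (m := m) hsc w
  have hsum : ‖gradient f w‖ ^ 2 + s ^ 2 * L ^ 2 * ‖w - m‖ ^ 2 ≤
      2 * L * ⟪gradient f w, w - m⟫ := by
    rw [show s ^ 2 * L ^ 2 = μ * L by rw [← hs]; ring]
    linarith [mul_le_mul_of_nonneg_left hinner (by positivity : (0 : ℝ) ≤ 2 * L)]
  -- AM-GM: `2 s L ‖∇f w‖ ‖w - m‖ ≤ ‖∇f w‖² + (s L ‖w - m‖)²`
  have hamgm := sq_nonneg (‖gradient f w‖ - s * L * ‖w - m‖)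
  nlinarith

theorem angle_gradient_sub_le_arccos_sqrt (hμ : 0 < μ) (hL : 0 < L)
    (hsc : ∀ a b : E, f a + ⟪gradient f a, b - a⟫ + μ / 2 * ‖b - a‖ ^ 2 ≤ f b)
    (hsm : ∀ a b : E, f b ≤ f a + ⟪gradient f a, b - a⟫ + L / 2 * ‖b - a‖ ^ 2)
    (hmin : ∀ x, f m ≤ f x) {w : E} (hw : w ≠ m) :
    angle (gradient f w) (w - m) ≤ Real.arccos √(μ / L) := by
  have hv : w - m ≠ 0 := sub_ne_zero.mpr hw
  have hgrad : gradient f w ≠ 0 := by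
    intro h0
    have hinner := le_inner_gradient_sub_of_stronglyConvex (m := m) hsc w
    rw [h0, inner_zero_left] at hinner
    nlinarith [hmin w, mul_pos hμ (pow_pos (norm_pos_iff.mpr hv) 2)]
  exact angle_le_arccos_of_mul_norm_mul_norm_le_inner hgrad hv
    (sqrt_div_mul_norm_mul_norm_le_inner_gradient hμ.le hL hsc hsm hmin w)

end StronglyConvexSmooth

theorem egd_one_step_contraction_general {n : ℕ} (ℓ : EuclideanSpace ℝ (Fin n) → ℝ) (μ L : ℝ)
    (hμ : 0 < μ) (hμL : μ ≤ L)
    (hsc : ∀ a b : EuclideanSpace ℝ (Fin n),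
      ℓ a + ⟪gradient ℓ a, b - a⟫ + μ / 2 * ‖b - a‖ ^ 2 ≤ ℓ b)
    (hsm : ∀ a b : EuclideanSpace ℝ (Fin n),
      ℓ b ≤ ℓ a + ⟪gradient ℓ a, b - a⟫ + L / 2 * ‖b - a‖ ^ 2)
    (wstar : EuclideanSpace ℝ (Fin n)) (hmin : ∀ w, ℓ wstar ≤ ℓ w)
    (w g : EuclideanSpace ℝ (Fin n)) (hw : w ≠ wstar) (hg : g ≠ 0)
    (θ : ℝ) (hθ : θ < Real.pi / 2)
    (hangle : angle g (gradient ℓ w) + Real.arccos (Real.sqrt (μ / L)) ≤ θ) :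
    ∃ η : ℝ, 0 < η ∧ ‖w - η • g - wstar‖ ≤ Real.sin θ * ‖w - wstar‖ := by
  have hcoherence := angle_gradient_sub_le_arccos_sqrt hμ (hμ.trans_le hμL) hsc hsm hmin hw
  have hdescent : angle g (w - wstar) ≤ θ :=
    (angle_le_angle_add_angle g (gradient ℓ w) (w - wstar)).trans (by linarith)
  obtain ⟨η, hη, hstep⟩ :=
    exists_pos_norm_sub_smul_le_sin_mul hg (sub_ne_zero.mpr hw) hθ hdescent
  exact ⟨η, hη, by rwa [sub_right_comm]⟩

/-- One step of estimated gradient descent: if the gradient estimation angle plus the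
convex-smooth angle `arccos √(μ/L)` is at most `θ < π/2`, then there is a learning rate
`η > 0` contracting the distance to the global minimizer by a factor `sin θ`. -/
theorem egd_one_step_contraction {n : ℕ} (ℓ : EuclideanSpace ℝ (Fin n) → ℝ) (μ L : ℝ)
    (hμ : 0 < μ) (hμL : μ ≤ L)
    (hdiff : Differentiable ℝ ℓ)
    (hsc : ∀ a b : EuclideanSpace ℝ (Fin n),
      ℓ a + ⟪gradient ℓ a, b - a⟫ + μ / 2 * ‖b - a‖ ^ 2 ≤ ℓ b)
    (hsm : ∀ a b : EuclideanSpace ℝ (Fin n),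
      ℓ b ≤ ℓ a + ⟪gradient ℓ a, b - a⟫ + L / 2 * ‖b - a‖ ^ 2)
    (wstar : EuclideanSpace ℝ (Fin n)) (hmin : ∀ w, ℓ wstar ≤ ℓ w)
    (w g : EuclideanSpace ℝ (Fin n)) (hw : w ≠ wstar) (hg : g ≠ 0)
    (θ : ℝ) (hθ : θ < Real.pi / 2)
    (hangle : angle g (gradient ℓ w) + Real.arccos (Real.sqrt (μ / L)) ≤ θ) :
    ∃ η : ℝ, 0 < η ∧ ‖w - η • g - wstar‖ ≤ Real.sin θ * ‖w - wstar‖ :=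
  egd_one_step_contraction_general ℓ μ L hμ hμL hsc hsm wstar hmin w g hw hg θ hθ hangle
end

section
/- Let A be a real m × n matrix such that A·Aᵀ is positive definite, with eigenvalues of A·Aᵀ equal to σ_1, …, σ_m > 0; set σ_min = min_i σ_i and σ_max = max_i σ_i. If ρ ≥ σ_max/σ_min (so ρ ≥ 1), then for any nonzero vectors u, v ∈ ℝ^m, cos ∠(Aᵀu, Aᵀv) ≥ ρ·cos ∠(u, v) + 1 − ρ. -/
open InnerProductGeometry Matrix RCLike

open scoped InnerProductSpace RealInnerProductSpace

/-! For unit vectors `u, v` put `a = Aᵀu`, `b = Aᵀv`. The Rayleigh bounds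
`σ_min ‖x‖² ≤ ‖Aᵀx‖² ≤ σ_max ‖x‖²` give `σ_min ≤ ‖a‖‖b‖` and
`‖a - b‖² ≤ σ_max ‖u - v‖² = 2 σ_max (1 - ⟪u, v⟫)`, so
`2⟪a, b⟫ = ‖a‖² + ‖b‖² - ‖a - b‖² ≥ 2‖a‖‖b‖ - 2ρ σ_min (1 - ⟪u, v⟫) ≥ 2‖a‖‖b‖ (1 - ρ (1 - ⟪u, v⟫))`.
Both sides of the theorem are invariant under scaling `u` and `v`. -/

section Rayleigh

variable {𝕜 E ι : Type*} [RCLike 𝕜] [NormedAddCommGroup E] [InnerProductSpace 𝕜 E] [Fintype ι]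
  {T : E →ₗ[𝕜] E} (b : OrthonormalBasis ι 𝕜 E) {μ : ι → ℝ}

theorem OrthonormalBasis.re_inner_map_self_eq_sum (hT : T.IsSymmetric)
    (hb : ∀ i, T (b i) = (μ i : 𝕜) • b i) (x : E) :
    re ⟪T x, x⟫_𝕜 = ∑ i, μ i * ‖b.repr x i‖ ^ 2 := by
  have hrepr : ∀ i, b.repr (T x) i = μ i * b.repr x i := fun i => by
    rw [b.repr_apply_apply, b.repr_apply_apply, ← hT, hb, inner_smul_left, conj_ofReal]
  rw [← b.repr.inner_map_map, PiLp.inner_apply, map_sum]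
  refine Finset.sum_congr rfl fun i _ => ?_
  rw [hrepr, ← smul_eq_mul, inner_smul_left, conj_ofReal, re_ofReal_mul, inner_self_eq_norm_sq]

theorem OrthonormalBasis.iInf_mul_norm_sq_le_re_inner_map_self (hT : T.IsSymmetric)
    (hb : ∀ i, T (b i) = (μ i : 𝕜) • b i) (x : E) :
    (⨅ i, μ i) * ‖x‖ ^ 2 ≤ re ⟪T x, x⟫_𝕜 := by
  rw [b.re_inner_map_self_eq_sum hT hb, ← b.repr.norm_map, EuclideanSpace.norm_sq_eq,
    Finset.mul_sum]
  gcongr with i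
  exact ciInf_le (Set.finite_range μ).bddBelow i

theorem OrthonormalBasis.re_inner_map_self_le_iSup_mul_norm_sq (hT : T.IsSymmetric)
    (hb : ∀ i, T (b i) = (μ i : 𝕜) • b i) (x : E) :
    re ⟪T x, x⟫_𝕜 ≤ (⨆ i, μ i) * ‖x‖ ^ 2 := by
  rw [b.re_inner_map_self_eq_sum hT hb, ← b.repr.norm_map, EuclideanSpace.norm_sq_eq,
    Finset.mul_sum]
  gcongr with i
  exact le_ciSup (Set.finite_range μ).bddAbove i

end Rayleigh

namespace Matrix

variable {𝕜 m n : Type*} [RCLike 𝕜] [Fintype m] [Fintype n] [DecidableEq n]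

namespace IsHermitian

variable {M : Matrix n n 𝕜} (hM : M.IsHermitian)

theorem toEuclideanLin_eigenvectorBasis (i : n) :
    toEuclideanLin M (hM.eigenvectorBasis i) = (hM.eigenvalues i : 𝕜) • hM.eigenvectorBasis i := by
  rw [toLpLin_apply, hM.mulVec_eigenvectorBasis, ← RCLike.real_smul_eq_coe_smul]
  rfl

theorem iInf_eigenvalues_mul_norm_sq_le (x : EuclideanSpace 𝕜 n) :
    (⨅ i, hM.eigenvalues i) * ‖x‖ ^ 2 ≤ re ⟪toEuclideanLin M x, x⟫_𝕜 :=
  hM.eigenvectorBasis.iInf_mul_norm_sq_le_re_inner_map_self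
    (isSymmetric_toEuclideanLin_iff.mpr hM) hM.toEuclideanLin_eigenvectorBasis x

theorem re_inner_le_iSup_eigenvalues_mul_norm_sq (x : EuclideanSpace 𝕜 n) :
    re ⟪toEuclideanLin M x, x⟫_𝕜 ≤ (⨆ i, hM.eigenvalues i) * ‖x‖ ^ 2 :=
  hM.eigenvectorBasis.re_inner_map_self_le_iSup_mul_norm_sq
    (isSymmetric_toEuclideanLin_iff.mpr hM) hM.toEuclideanLin_eigenvectorBasis x

end IsHermitian

theorem norm_toEuclideanLin_conjTranspose_sq [DecidableEq m] (A : Matrix m n 𝕜)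
    (x : EuclideanSpace 𝕜 m) :
    ‖toEuclideanLin Aᴴ x‖ ^ 2 = re ⟪toEuclideanLin (A * Aᴴ) x, x⟫_𝕜 := by
  rw [← inner_self_eq_norm_sq (𝕜 := 𝕜), toEuclideanLin_conjTranspose_eq_adjoint,
    LinearMap.adjoint_inner_left, ← toEuclideanLin_conjTranspose_eq_adjoint, inner_re_symm,
    toLpLin_mul_same, LinearMap.comp_apply]

end Matrix

namespace InnerProductGeometry

variable {E F : Type*} [NormedAddCommGroup E] [InnerProductSpace ℝ E]
  [NormedAddCommGroup F] [InnerProductSpace ℝ F]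
  {T : E →ₗ[ℝ] F} {α β ρ : ℝ}

theorem le_mul_norm_map_of_norm_eq_one (hα : 0 ≤ α) (hlow : ∀ x, α * ‖x‖ ^ 2 ≤ ‖T x‖ ^ 2)
    {u v : E} (hu : ‖u‖ = 1) (hv : ‖v‖ = 1) : α ≤ ‖T u‖ * ‖T v‖ := by
  have hTu := hlow u
  have hTv := hlow v
  rw [hu, one_pow, mul_one] at hTu
  rw [hv, one_pow, mul_one] at hTv
  have hsq : α ^ 2 ≤ (‖T u‖ * ‖T v‖) ^ 2 := by
    rw [sq, mul_pow]
    exact mul_le_mul hTu hTv hα (sq_nonneg _)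
  exact (pow_le_pow_iff_left₀ hα (by positivity) two_ne_zero).mp hsq

theorem mul_inner_add_sub_le_inner_map (hα : 0 < α)
    (hlow : ∀ x, α * ‖x‖ ^ 2 ≤ ‖T x‖ ^ 2) (hup : ∀ x, ‖T x‖ ^ 2 ≤ β * ‖x‖ ^ 2)
    (hβ : β ≤ ρ * α) {u v : E} (hu : ‖u‖ = 1) (hv : ‖v‖ = 1) :
    (ρ * ⟪u, v⟫ + 1 - ρ) * (‖T u‖ * ‖T v‖) ≤ ⟪T u, T v⟫ := by
  have hρ : 0 ≤ ρ := by
    have := (hlow u).trans (hup u)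
    rw [hu, one_pow, mul_one, mul_one] at this
    nlinarith
  have hc : 0 ≤ 1 - ⟪u, v⟫ := by
    have := real_inner_le_norm u v
    rw [hu, hv, one_mul] at this
    linarith
  have hα_le := le_mul_norm_map_of_norm_eq_one hα.le hlow hu hv
  have hdiff : ‖T u - T v‖ ^ 2 ≤ β * (2 * (1 - ⟪u, v⟫)) := by
    have := hup (u - v)
    rw [map_sub, norm_sub_sq_real u v, hu, hv] at this
    exact this.trans_eq (by ring)
  calc (ρ * ⟪u, v⟫ + 1 - ρ) * (‖T u‖ * ‖T v‖)
      = ‖T u‖ * ‖T v‖ - ρ * (1 - ⟪u, v⟫) * (‖T u‖ * ‖T v‖) := by ring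
    _ ≤ ‖T u‖ * ‖T v‖ - ρ * (1 - ⟪u, v⟫) * α := by gcongr
    _ ≤ ‖T u‖ * ‖T v‖ - β * (1 - ⟪u, v⟫) := by
        linarith [mul_le_mul_of_nonneg_right hβ hc]
    _ ≤ (‖T u‖ ^ 2 + ‖T v‖ ^ 2) / 2 - ‖T u - T v‖ ^ 2 / 2 := by
        linarith [two_mul_le_add_sq ‖T u‖ ‖T v‖]
    _ = ⟪T u, T v⟫ := by rw [norm_sub_sq_real]; ring

theorem mul_cos_angle_add_sub_le_cos_angle_map (hα : 0 < α)
    (hlow : ∀ x, α * ‖x‖ ^ 2 ≤ ‖T x‖ ^ 2) (hup : ∀ x, ‖T x‖ ^ 2 ≤ β * ‖x‖ ^ 2)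
    (hβ : β ≤ ρ * α) {u v : E} (hu : u ≠ 0) (hv : v ≠ 0) :
    ρ * Real.cos (angle u v) + 1 - ρ ≤ Real.cos (angle (T u) (T v)) := by
  have hu₀ : 0 < ‖u‖⁻¹ := inv_pos.mpr (norm_pos_iff.mpr hu)
  have hv₀ : 0 < ‖v‖⁻¹ := inv_pos.mpr (norm_pos_iff.mpr hv)
  have hu₁ : ‖‖u‖⁻¹ • u‖ = 1 := norm_smul_inv_norm hu
  have hv₁ : ‖‖v‖⁻¹ • v‖ = 1 := norm_smul_inv_norm hv
  have hangle : angle u v = angle (‖u‖⁻¹ • u) (‖v‖⁻¹ • v) := by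
    rw [angle_smul_left_of_pos _ _ hu₀, angle_smul_right_of_pos _ _ hv₀]
  have hangle_map : angle (T u) (T v) = angle (T (‖u‖⁻¹ • u)) (T (‖v‖⁻¹ • v)) := by
    rw [map_smul, map_smul, angle_smul_left_of_pos _ _ hu₀, angle_smul_right_of_pos _ _ hv₀]
  have hpos : 0 < ‖T (‖u‖⁻¹ • u)‖ * ‖T (‖v‖⁻¹ • v)‖ :=
    hα.trans_le (le_mul_norm_map_of_norm_eq_one hα.le hlow hu₁ hv₁)
  rw [hangle, hangle_map, cos_angle, cos_angle, hu₁, hv₁, mul_one, div_one, le_div_iff₀ hpos]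
  exact mul_inner_add_sub_le_inner_map hα hlow hup hβ hu₁ hv₁

end InnerProductGeometry

/-- If `A Aᵀ` is positive definite with eigenvalues `σ_i > 0` and
`ρ ≥ σ_max / σ_min`, then for nonzero `u, v`,
`cos ∠(Aᵀu, Aᵀv) ≥ ρ cos ∠(u, v) + 1 - ρ`. -/
theorem cos_angle_transpose_mul {m n : ℕ} (A : Matrix (Fin m) (Fin n) ℝ) (ρ : ℝ)
    (hpd : (A * Aᵀ).PosDef) (hH : (A * Aᵀ).IsHermitian)
    (hρ : (⨆ i, hH.eigenvalues i) / (⨅ i, hH.eigenvalues i) ≤ ρ)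
    (u v : EuclideanSpace ℝ (Fin m)) (hu : u ≠ 0) (hv : v ≠ 0) :
    ρ * Real.cos (angle u v) + 1 - ρ ≤
      Real.cos (angle (Matrix.toEuclideanLin Aᵀ u) (Matrix.toEuclideanLin Aᵀ v)) := by
  obtain ⟨i₀, -⟩ : ∃ i, u i ≠ 0 := by
    by_contra! h
    exact hu (by ext i; exact h i)
  have : Nonempty (Fin m) := ⟨i₀⟩
  have hα : 0 < ⨅ i, hH.eigenvalues i := by
    obtain ⟨i, hi⟩ := exists_eq_ciInf_of_finite (f := hH.eigenvalues)
    exact hi ▸ hpd.eigenvalues_pos i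
  have hnorm (x : EuclideanSpace ℝ (Fin m)) :
      ‖toEuclideanLin Aᵀ x‖ ^ 2 = ⟪toEuclideanLin (A * Aᵀ) x, x⟫ := by
    simpa only [conjTranspose_eq_transpose_of_trivial, re_to_real] using
      norm_toEuclideanLin_conjTranspose_sq A x
  refine mul_cos_angle_add_sub_le_cos_angle_map hα (fun x => ?_) (fun x => ?_)
    ((div_le_iff₀ hα).mp hρ) hu hv
  · rw [hnorm]
    exact hH.iInf_eigenvalues_mul_norm_sq_le x
  · rw [hnorm]
    exact hH.re_inner_le_iSup_eigenvalues_mul_norm_sq x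
end

section
/- Let v ∈ ℝ^n and let k ∈ {0, 1, …, n}. Let S ⊆ {1, …, n} be a set of k indices of the k entries of v with largest absolute value (i.e., |v_i| ≥ |v_j| for every i ∈ S and j ∉ S). Then Σ_{i ∈ S} v_i² ≥ (k/n)·Σ_{i=1}^n v_i². Consequently, writing top_k(v) for the vector that agrees with v on S and is zero elsewhere, one has ⟪top_k(v), v⟫ = ‖top_k(v)‖², and if v ≠ 0 and top_k(v) ≠ 0 then cos ∠(top_k(v), v) = ‖top_k(v)‖/‖v‖ ≥ √(k/n); i.e., top_k is a sparsifying function with sparse ratio r = k/n. -/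
/-!
Every entry inside `S` dominates every entry outside it, so comparing the double sum
`∑_{i ∈ S} ∑_{j ∉ S}` termwise gives `|S| · ∑_{j ∉ S} f j ≤ |Sᶜ| · ∑_{i ∈ S} f i`; adding
`|S| · ∑_{i ∈ S} f i` to both sides turns this into `|S| · ∑ f ≤ n · ∑_{i ∈ S} f`, applied to
`f = v²`. The top-`k` vector `t` is the orthogonal projection of `v` onto the coordinates in
`S`, so `⟪t, v⟫ = ‖t‖²`, which makes `cos ∠(t, v) = ‖t‖ / ‖v‖`.
-/

open InnerProductGeometry RealInnerProductSpace

namespace Finset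

variable {ι α : Type*} [Fintype ι] [DecidableEq ι]
  [Field α] [LinearOrder α] [IsStrictOrderedRing α]

theorem card_mul_sum_compl_le_card_compl_mul_sum {S : Finset ι} {f : ι → α}
    (hf : ∀ i ∈ S, ∀ j ∉ S, f j ≤ f i) :
    (#S : α) * ∑ j ∈ Sᶜ, f j ≤ (#Sᶜ : α) * ∑ i ∈ S, f i := by
  have hdouble : ∑ _i ∈ S, ∑ j ∈ Sᶜ, f j ≤ ∑ i ∈ S, ∑ _j ∈ Sᶜ, f i :=
    sum_le_sum fun i hi => sum_le_sum fun j hj => hf i hi j (mem_compl.mp hj)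
  simpa only [sum_const, nsmul_eq_mul, mul_sum] using hdouble

theorem card_mul_sum_le_card_mul_sum_of_forall_le {S : Finset ι} {f : ι → α}
    (hf : ∀ i ∈ S, ∀ j ∉ S, f j ≤ f i) :
    (#S : α) * ∑ i, f i ≤ (Fintype.card ι : α) * ∑ i ∈ S, f i := by
  have hcard : (Fintype.card ι : α) = #S + #Sᶜ := by
    rw [← Nat.cast_add, card_add_card_compl]
  rw [← sum_add_sum_compl S f, hcard]
  linarith [card_mul_sum_compl_le_card_compl_mul_sum hf]

theorem card_div_mul_sum_le_sum_of_forall_le {S : Finset ι} {f : ι → α}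
    (hf : ∀ i ∈ S, ∀ j ∉ S, f j ≤ f i) :
    (#S : α) / Fintype.card ι * ∑ i, f i ≤ ∑ i ∈ S, f i := by
  rcases isEmpty_or_nonempty ι with hι | hι
  · simp [Subsingleton.elim S ∅]
  · rw [div_mul_eq_mul_div, div_le_iff₀ (by exact_mod_cast Fintype.card_pos), mul_comm (∑ i ∈ S, f i)]
    exact card_mul_sum_le_card_mul_sum_of_forall_le hf

end Finset

namespace InnerProductGeometry

variable {E : Type*} [NormedAddCommGroup E] [InnerProductSpace ℝ E]

theorem cos_angle_eq_norm_div_norm_of_inner_eq_norm_sq {x y : E} (h : ⟪x, y⟫ = ‖x‖ ^ 2) :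
    Real.cos (angle x y) = ‖x‖ / ‖y‖ := by
  rw [cos_angle, h]
  rcases eq_or_ne ‖x‖ 0 with hx | hx
  · simp [hx]
  · rw [sq, mul_div_mul_left _ _ hx]

end InnerProductGeometry

namespace EuclideanSpace

variable {ι : Type*} [Fintype ι] [DecidableEq ι]

theorem inner_eq_sum_sq_of_apply_eq_ite {S : Finset ι} {v t : EuclideanSpace ℝ ι}
    (ht : ∀ i, t i = if i ∈ S then v i else 0) :
    ⟪t, v⟫ = ∑ i ∈ S, v i ^ 2 := by
  simp only [PiLp.inner_apply, ht, RCLike.inner_apply, conj_trivial]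
  rw [← Finset.sum_subset (Finset.subset_univ S) fun i _ hi => by simp [hi]]
  exact Finset.sum_congr rfl fun i hi => by simp [hi, sq]

theorem norm_sq_eq_sum_sq_of_apply_eq_ite {S : Finset ι} {v t : EuclideanSpace ℝ ι}
    (ht : ∀ i, t i = if i ∈ S then v i else 0) :
    ‖t‖ ^ 2 = ∑ i ∈ S, v i ^ 2 := by
  rw [real_norm_sq_eq, ← Finset.sum_subset (Finset.subset_univ S) fun i _ hi => by simp [ht, hi]]
  exact Finset.sum_congr rfl fun i hi => by simp [ht, hi]

end EuclideanSpace

theorem Real.sqrt_le_div_of_mul_sq_le {r a b : ℝ} (ha : 0 ≤ a) (hb : 0 < b)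
    (h : r * b ^ 2 ≤ a ^ 2) : Real.sqrt r ≤ a / b := by
  rw [Real.sqrt_le_iff, div_pow, le_div_iff₀ (pow_pos hb 2)]
  exact ⟨div_nonneg ha hb.le, h⟩

theorem topk_sparsifying_general {n : ℕ} (v : EuclideanSpace ℝ (Fin n)) (k : ℕ)
    (S : Finset (Fin n)) (hcard : S.card = k)
    (hS : ∀ i ∈ S, ∀ j ∉ S, |v j| ≤ |v i|)
    (t : EuclideanSpace ℝ (Fin n)) (ht : ∀ i, t i = if i ∈ S then v i else 0) :
    ((k : ℝ) / (n : ℝ)) * ∑ i, (v i) ^ 2 ≤ ∑ i ∈ S, (v i) ^ 2 ∧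
    ⟪t, v⟫ = ‖t‖ ^ 2 ∧
    (v ≠ 0 → t ≠ 0 →
      Real.cos (angle t v) = ‖t‖ / ‖v‖ ∧
      Real.sqrt ((k : ℝ) / (n : ℝ)) ≤ ‖t‖ / ‖v‖) := by
  subst hcard
  have hmass : ((S.card : ℝ) / n) * ∑ i, v i ^ 2 ≤ ∑ i ∈ S, v i ^ 2 := by
    simpa only [Fintype.card_fin] using
      Finset.card_div_mul_sum_le_sum_of_forall_le fun i hi j hj => sq_le_sq.mpr (hS i hi j hj)
  have hinner : ⟪t, v⟫ = ‖t‖ ^ 2 := by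
    rw [EuclideanSpace.inner_eq_sum_sq_of_apply_eq_ite ht,
      EuclideanSpace.norm_sq_eq_sum_sq_of_apply_eq_ite ht]
  refine ⟨hmass, hinner, fun hv _ => ⟨cos_angle_eq_norm_div_norm_of_inner_eq_norm_sq hinner, ?_⟩⟩
  refine Real.sqrt_le_div_of_mul_sq_le (norm_nonneg t) (norm_pos_iff.mpr hv) ?_
  rwa [EuclideanSpace.real_norm_sq_eq, EuclideanSpace.norm_sq_eq_sum_sq_of_apply_eq_ite ht]

/-- `top_k` is a sparsifying function with sparse ratio `k/n`: if `S` collects `k` indices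
of entries of `v` with largest absolute value, then `∑_{i∈S} v_i² ≥ (k/n) ∑_i v_i²`;
moreover for the vector `t = top_k(v)` (agreeing with `v` on `S`, zero elsewhere),
`⟪t, v⟫ = ‖t‖²` and, when `v ≠ 0` and `t ≠ 0`,
`cos ∠(t, v) = ‖t‖/‖v‖ ≥ √(k/n)`. -/
theorem topk_sparsifying {n : ℕ} (v : EuclideanSpace ℝ (Fin n)) (k : ℕ) (hk : k ≤ n)
    (S : Finset (Fin n)) (hcard : S.card = k)
    (hS : ∀ i ∈ S, ∀ j ∉ S, |v j| ≤ |v i|)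
    (t : EuclideanSpace ℝ (Fin n)) (ht : ∀ i, t i = if i ∈ S then v i else 0) :
    ((k : ℝ) / (n : ℝ)) * ∑ i, (v i) ^ 2 ≤ ∑ i ∈ S, (v i) ^ 2 ∧
    ⟪t, v⟫ = ‖t‖ ^ 2 ∧
    (v ≠ 0 → t ≠ 0 →
      Real.cos (angle t v) = ‖t‖ / ‖v‖ ∧
      Real.sqrt ((k : ℝ) / (n : ℝ)) ≤ ‖t‖ / ‖v‖) :=
  topk_sparsifying_general v k S hcard hS t ht
end

section
/- Let d ∈ ℝ^m have all entries strictly positive, with d_min = min_i d_i and d_max = max_i d_i, and let ρ ≥ (d_max/d_min)² (so ρ ≥ 1). Then for any nonzero vectors u, v ∈ ℝ^m, cos ∠(d ⊙ u, d ⊙ v) ≥ ρ·cos ∠(u, v) + 1 − ρ, where ⊙ denotes the componentwise (Hadamard) product. -/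
/-!
A linear map `T` with `L‖x‖ ≤ ‖T x‖ ≤ M‖x‖` distorts angles in a controlled way. For unit vectors
`x, y` we have `‖x - y‖² = 2 (1 - cos ∠(x, y))`, while
`‖T x - T y‖² ≥ 2 ‖T x‖ ‖T y‖ (1 - cos ∠(T x, T y)) ≥ 2 L² (1 - cos ∠(T x, T y))`;
together with `‖T (x - y)‖ ≤ M ‖x - y‖` this gives
`1 - cos ∠(T x, T y) ≤ (M / L)² (1 - cos ∠(x, y))`, and angles are unchanged by normalizing.
The Hadamard product with `d` is the diagonal map, with `L = d_min` and `M = d_max`.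
-/

open InnerProductGeometry

section Distortion

variable {E F : Type*} [NormedAddCommGroup E] [InnerProductSpace ℝ E]
  [NormedAddCommGroup F] [InnerProductSpace ℝ F]

theorem two_mul_norm_mul_norm_mul_one_sub_cos_angle_le (x y : F) :
    2 * (‖x‖ * ‖y‖) * (1 - Real.cos (angle x y)) ≤ ‖x - y‖ ^ 2 := by
  rw [sq, norm_sub_sq_eq_norm_sq_add_norm_sq_sub_two_mul_norm_mul_norm_mul_cos_angle]
  nlinarith [sq_nonneg (‖x‖ - ‖y‖)]

theorem norm_sub_sq_eq_two_mul_one_sub_cos_angle {x y : E} (hx : ‖x‖ = 1) (hy : ‖y‖ = 1) :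
    ‖x - y‖ ^ 2 = 2 * (1 - Real.cos (angle x y)) := by
  rw [sq, norm_sub_sq_eq_norm_sq_add_norm_sq_sub_two_mul_norm_mul_norm_mul_cos_angle, hx, hy]
  ring

variable (T : E →ₗ[ℝ] F) {L M : ℝ}

theorem one_sub_cos_angle_map_le_of_norm_eq_one (hL : 0 < L) (hLT : ∀ x, L * ‖x‖ ≤ ‖T x‖)
    (hTM : ∀ x, ‖T x‖ ≤ M * ‖x‖) {x y : E} (hx : ‖x‖ = 1) (hy : ‖y‖ = 1) :
    1 - Real.cos (angle (T x) (T y)) ≤ (M / L) ^ 2 * (1 - Real.cos (angle x y)) := by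
  have hTx : L ≤ ‖T x‖ := by simpa [hx] using hLT x
  have hTy : L ≤ ‖T y‖ := by simpa [hy] using hLT y
  have lower : 2 * L ^ 2 * (1 - Real.cos (angle (T x) (T y))) ≤ ‖T x - T y‖ ^ 2 := by
    refine le_trans ?_ (two_mul_norm_mul_norm_mul_one_sub_cos_angle_le _ _)
    gcongr
    · exact sub_nonneg.2 (Real.cos_le_one _)
    · rw [sq]; exact mul_le_mul hTx hTy hL.le (norm_nonneg _)
  have upper : ‖T x - T y‖ ^ 2 ≤ M ^ 2 * ‖x - y‖ ^ 2 := by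
    rw [← map_sub, ← mul_pow]
    exact pow_le_pow_left₀ (norm_nonneg _) (hTM _) 2
  rw [norm_sub_sq_eq_two_mul_one_sub_cos_angle hx hy] at upper
  rw [div_pow, div_mul_eq_mul_div, le_div_iff₀ (by positivity)]
  linarith

theorem one_sub_cos_angle_map_le (hL : 0 < L) (hLT : ∀ x, L * ‖x‖ ≤ ‖T x‖)
    (hTM : ∀ x, ‖T x‖ ≤ M * ‖x‖) {x y : E} (hx : x ≠ 0) (hy : y ≠ 0) :
    1 - Real.cos (angle (T x) (T y)) ≤ (M / L) ^ 2 * (1 - Real.cos (angle x y)) := by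
  have hx' : 0 < ‖x‖⁻¹ := inv_pos.2 (norm_pos_iff.2 hx)
  have hy' : 0 < ‖y‖⁻¹ := inv_pos.2 (norm_pos_iff.2 hy)
  have := one_sub_cos_angle_map_le_of_norm_eq_one T hL hLT hTM
    (norm_smul_inv_norm (𝕜 := ℝ) hx) (norm_smul_inv_norm (𝕜 := ℝ) hy)
  simpa only [map_smul, RCLike.ofReal_real_eq_id, id_eq, angle_smul_left_of_pos _ _ hx',
    angle_smul_right_of_pos _ _ hy'] using this

end Distortion

namespace Matrix

variable {ι : Type*} [Fintype ι] [DecidableEq ι]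

theorem toEuclideanLin_diagonal_apply (d : ι → ℝ) (x : EuclideanSpace ℝ ι) (i : ι) :
    toEuclideanLin (diagonal d) x i = d i * x i := by
  simp [toLpLin_apply, mulVec_diagonal]

theorem norm_toEuclideanLin_diagonal_sq (d : ι → ℝ) (x : EuclideanSpace ℝ ι) :
    ‖toEuclideanLin (diagonal d) x‖ ^ 2 = ∑ i, d i ^ 2 * x i ^ 2 := by
  simp only [EuclideanSpace.real_norm_sq_eq, toEuclideanLin_diagonal_apply, mul_pow]

theorem mul_norm_le_norm_toEuclideanLin_diagonal {d : ι → ℝ} {L : ℝ} (hL : 0 ≤ L)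
    (hLd : ∀ i, L ≤ |d i|) (x : EuclideanSpace ℝ ι) :
    L * ‖x‖ ≤ ‖toEuclideanLin (diagonal d) x‖ := by
  refine le_of_pow_le_pow_left₀ two_ne_zero (norm_nonneg _) ?_
  rw [mul_pow, norm_toEuclideanLin_diagonal_sq, EuclideanSpace.real_norm_sq_eq, Finset.mul_sum]
  gcongr ∑ i, ?_ * _ with i
  rw [← sq_abs (d i)]
  exact pow_le_pow_left₀ hL (hLd i) 2

theorem norm_toEuclideanLin_diagonal_le {d : ι → ℝ} {M : ℝ} (hM : 0 ≤ M) (hdM : ∀ i, |d i| ≤ M)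
    (x : EuclideanSpace ℝ ι) : ‖toEuclideanLin (diagonal d) x‖ ≤ M * ‖x‖ := by
  refine le_of_pow_le_pow_left₀ two_ne_zero (by positivity) ?_
  rw [mul_pow, norm_toEuclideanLin_diagonal_sq, EuclideanSpace.real_norm_sq_eq, Finset.mul_sum]
  gcongr ∑ i, ?_ * _ with i
  rw [← sq_abs (d i)]
  exact pow_le_pow_left₀ (abs_nonneg _) (hdM i) 2

end Matrix

/-- If `d` has strictly positive entries and `ρ ≥ (d_max/d_min)²`, then for nonzero
`u, v`, `cos ∠(d ⊙ u, d ⊙ v) ≥ ρ cos ∠(u, v) + 1 - ρ`, where `⊙` is the componentwise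
product. -/
theorem cos_angle_hadamard {m : ℕ} (d : Fin m → ℝ) (hd : ∀ i, 0 < d i) (ρ : ℝ)
    (hρ : ((⨆ i, d i) / (⨅ i, d i)) ^ 2 ≤ ρ)
    (u v du dv : EuclideanSpace ℝ (Fin m)) (hu : u ≠ 0) (hv : v ≠ 0)
    (hdu : ∀ i, du i = d i * u i) (hdv : ∀ i, dv i = d i * v i) :
    ρ * Real.cos (angle u v) + 1 - ρ ≤ Real.cos (angle du dv) := by
  obtain ⟨i₀, -⟩ : ∃ i, u i ≠ 0 := by
    by_contra! h
    exact hu (by ext i; exact h i)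
  have hfin := Set.finite_range d
  have hdM : ∀ i, |d i| ≤ ⨆ j, d j := fun i =>
    (abs_of_pos (hd i)).trans_le (le_ciSup hfin.bddAbove i)
  have hLd : ∀ i, ⨅ j, d j ≤ |d i| := fun i =>
    (ciInf_le hfin.bddBelow i).trans_eq (abs_of_pos (hd i)).symm
  have hL : 0 < ⨅ j, d j := by
    have : Nonempty (Fin m) := ⟨i₀⟩
    obtain ⟨i, hi⟩ := Finite.exists_min d
    exact (hd i).trans_le (le_ciInf hi)
  set D := Matrix.toEuclideanLin (Matrix.diagonal d)
  have hDu : D u = du := by ext i; rw [Matrix.toEuclideanLin_diagonal_apply, hdu]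
  have hDv : D v = dv := by ext i; rw [Matrix.toEuclideanLin_diagonal_apply, hdv]
  have key := one_sub_cos_angle_map_le D hL
    (Matrix.mul_norm_le_norm_toEuclideanLin_diagonal hL.le hLd)
    (Matrix.norm_toEuclideanLin_diagonal_le ((abs_nonneg _).trans (hdM i₀)) hdM) hu hv
  rw [hDu, hDv] at key
  linarith [mul_le_mul_of_nonneg_right hρ (sub_nonneg.2 (Real.cos_le_one (angle u v)))]
end

section
/- Let g, t ∈ ℝ^m be nonzero vectors (the estimated and true gradients of the layer output z), let d ∈ ℝ^m have strictly positive entries with ρ₂ ≥ (max_i d_i / min_i d_i)², and let r ∈ (0, 1]. Suppose ρ₂·cos ∠(g, t) + 1 − ρ₂ > 0. Let s ∈ ℝ^m be any nonzero vector with ∠(s, d ⊙ g) ≤ arccos√r (e.g., s = S(d ⊙ g) for a sparsifying function S with sparse ratio r). Then ∠(s, d ⊙ t) ≤ arccos√r + arccos(ρ₂·cos ∠(g, t) + 1 − ρ₂). -/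
open InnerProductGeometry
open scoped RealInnerProductSpace

/-! Coordinatewise multiplication by `d` is a linear map `D` with `a‖x‖ ≤ ‖D x‖ ≤ b‖x‖`, where
`a` and `b` are the smallest and largest entries of `d`. For unit vectors `u, v`, expanding
`‖D u - D v‖² ≤ b²‖u - v‖²` and using `b² ≤ ρ₂ a² ≤ ρ₂ ‖D u‖ ‖D v‖` gives
`cos ∠(D u, D v) ≥ ρ₂ cos ∠(u, v) + 1 - ρ₂`. The triangle inequality for angles, through
`d ⊙ g`, then adds the two angle bounds. -/

section BoundedDistortion

variable {V W : Type*} [NormedAddCommGroup V] [InnerProductSpace ℝ V]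
  [NormedAddCommGroup W] [InnerProductSpace ℝ W] {T : V →ₗ[ℝ] W} {a b ρ : ℝ}

lemma inner_map_ge_of_norm_eq_one (ha : 0 < a) (hlow : ∀ x, a * ‖x‖ ≤ ‖T x‖)
    (hup : ∀ x, ‖T x‖ ≤ b * ‖x‖) (hρ : (b / a) ^ 2 ≤ ρ) {u v : V} (hu : ‖u‖ = 1)
    (hv : ‖v‖ = 1) : (ρ * ⟪u, v⟫ + 1 - ρ) * (‖T u‖ * ‖T v‖) ≤ ⟪T u, T v⟫ := by
  have hTu : a ≤ ‖T u‖ := by simpa [hu] using hlow u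
  have hTv : a ≤ ‖T v‖ := by simpa [hv] using hlow v
  have hb : b ^ 2 ≤ ρ * a ^ 2 := by rwa [div_pow, div_le_iff₀ (by positivity)] at hρ
  have hρ0 : 0 ≤ ρ := le_trans (sq_nonneg _) hρ
  have hc : ⟪u, v⟫ ≤ 1 := by simpa [hu, hv] using real_inner_le_norm u v
  have hdiff : ‖T u‖ ^ 2 - 2 * ⟪T u, T v⟫ + ‖T v‖ ^ 2 ≤ b ^ 2 * (2 - 2 * ⟪u, v⟫) := by
    have h := pow_le_pow_left₀ (norm_nonneg _) (hup (u - v)) 2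
    rw [map_sub, norm_sub_sq_real, mul_pow, norm_sub_sq_real, hu, hv] at h
    linarith
  have haa : a ^ 2 ≤ ‖T u‖ * ‖T v‖ := by
    rw [sq]; exact mul_le_mul hTu hTv ha.le (norm_nonneg _)
  have hbρ : b ^ 2 ≤ ρ * (‖T u‖ * ‖T v‖) := hb.trans (mul_le_mul_of_nonneg_left haa hρ0)
  nlinarith [sq_nonneg (‖T u‖ - ‖T v‖), mul_nonneg (sub_nonneg.2 hbρ) (sub_nonneg.2 hc)]

lemma cos_angle_map_ge (ha : 0 < a) (hlow : ∀ x, a * ‖x‖ ≤ ‖T x‖)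
    (hup : ∀ x, ‖T x‖ ≤ b * ‖x‖) (hρ : (b / a) ^ 2 ≤ ρ) {x y : V} (hx : x ≠ 0) (hy : y ≠ 0) :
    ρ * Real.cos (angle x y) + 1 - ρ ≤ Real.cos (angle (T x) (T y)) := by
  set u := ‖x‖⁻¹ • x
  set v := ‖y‖⁻¹ • y
  have hu : ‖u‖ = 1 := norm_smul_inv_norm hx
  have hv : ‖v‖ = 1 := norm_smul_inv_norm hy
  have hx' : 0 < ‖x‖⁻¹ := inv_pos.2 (norm_pos_iff.2 hx)
  have hy' : 0 < ‖y‖⁻¹ := inv_pos.2 (norm_pos_iff.2 hy)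
  have hangle : angle x y = angle u v := by
    rw [angle_smul_left_of_pos _ _ hx', angle_smul_right_of_pos _ _ hy']
  have hangleT : angle (T x) (T y) = angle (T u) (T v) := by
    rw [map_smul, map_smul, angle_smul_left_of_pos _ _ hx', angle_smul_right_of_pos _ _ hy']
  have hTu : a ≤ ‖T u‖ := by simpa [hu] using hlow u
  have hTv : a ≤ ‖T v‖ := by simpa [hv] using hlow v
  have hpos : 0 < ‖T u‖ * ‖T v‖ := mul_pos (ha.trans_le hTu) (ha.trans_le hTv)
  rw [hangle, hangleT, cos_angle, cos_angle, hu, hv, one_mul, div_one, le_div_iff₀ hpos]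
  exact inner_map_ge_of_norm_eq_one ha hlow hup hρ hu hv

lemma angle_map_le_arccos (ha : 0 < a) (hlow : ∀ x, a * ‖x‖ ≤ ‖T x‖)
    (hup : ∀ x, ‖T x‖ ≤ b * ‖x‖) (hρ : (b / a) ^ 2 ≤ ρ) {x y : V} (hx : x ≠ 0) (hy : y ≠ 0) :
    angle (T x) (T y) ≤ Real.arccos (ρ * Real.cos (angle x y) + 1 - ρ) := by
  rw [← Real.arccos_cos (angle_nonneg (T x) (T y)) (angle_le_pi _ _)]
  exact Real.arccos_le_arccos (cos_angle_map_ge ha hlow hup hρ hx hy)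

end BoundedDistortion

section DiagonalScaling

variable {ι : Type*} [Fintype ι] [DecidableEq ι] {d : ι → ℝ}

@[simp]
lemma toEuclideanLin_diagonal_apply (x : EuclideanSpace ℝ ι) (i : ι) :
    Matrix.toEuclideanLin (Matrix.diagonal d) x i = d i * x i := by
  simp [Matrix.mulVec_diagonal]

lemma norm_toEuclideanLin_diagonal_eq (x : EuclideanSpace ℝ ι) :
    ‖Matrix.toEuclideanLin (Matrix.diagonal d) x‖ = √(∑ i, |d i| ^ 2 * ‖x i‖ ^ 2) := by
  simp [EuclideanSpace.norm_eq, mul_pow]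

lemma mul_norm_le_norm_toEuclideanLin_diagonal {a : ℝ} (ha : 0 ≤ a) (hd : ∀ i, a ≤ |d i|)
    (x : EuclideanSpace ℝ ι) : a * ‖x‖ ≤ ‖Matrix.toEuclideanLin (Matrix.diagonal d) x‖ := by
  rw [norm_toEuclideanLin_diagonal_eq, EuclideanSpace.norm_eq, ← Real.sqrt_sq ha,
    ← Real.sqrt_mul (sq_nonneg a), Finset.mul_sum]
  gcongr with i
  exact hd i

lemma norm_toEuclideanLin_diagonal_le {b : ℝ} (hd : ∀ i, |d i| ≤ b)
    (x : EuclideanSpace ℝ ι) : ‖Matrix.toEuclideanLin (Matrix.diagonal d) x‖ ≤ b * ‖x‖ := by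
  obtain hι | hι := isEmpty_or_nonempty ι
  · simp [EuclideanSpace.norm_eq]
  have hb : 0 ≤ b := le_trans (abs_nonneg _) (hd (Classical.arbitrary ι))
  rw [norm_toEuclideanLin_diagonal_eq, EuclideanSpace.norm_eq, ← Real.sqrt_sq hb,
    ← Real.sqrt_mul (sq_nonneg b), Finset.mul_sum]
  gcongr with i
  exact hd i

end DiagonalScaling

theorem sparse_bp_h_angle_general {m : ℕ} (g t : EuclideanSpace ℝ (Fin m))
    (hg : g ≠ 0) (ht : t ≠ 0)
    (d : Fin m → ℝ) (hd : ∀ i, 0 < d i) (ρ₂ : ℝ)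
    (hρ₂ : ((⨆ i, d i) / (⨅ i, d i)) ^ 2 ≤ ρ₂)
    (r : ℝ)
    (dg dt : EuclideanSpace ℝ (Fin m))
    (hdg : ∀ i, dg i = d i * g i) (hdt : ∀ i, dt i = d i * t i)
    (s : EuclideanSpace ℝ (Fin m))
    (hsangle : angle s dg ≤ Real.arccos (Real.sqrt r)) :
    angle s dt ≤
      Real.arccos (Real.sqrt r) + Real.arccos (ρ₂ * Real.cos (angle g t) + 1 - ρ₂) := by
  have : Nonempty (Fin m) := by
    by_contra h
    exact hg (by ext i; exact (h ⟨i⟩).elim)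
  set D := Matrix.toEuclideanLin (Matrix.diagonal d)
  have hDg : dg = D g := by ext i; simp [D, hdg]
  have hDt : dt = D t := by ext i; simp [D, hdt]
  obtain ⟨i₀, hi₀⟩ := exists_eq_ciInf_of_finite (f := d)
  have hlow : ∀ x, (⨅ i, d i) * ‖x‖ ≤ ‖D x‖ :=
    mul_norm_le_norm_toEuclideanLin_diagonal (hi₀ ▸ (hd i₀).le)
      fun i ↦ (ciInf_le (Finite.bddBelow_range d) i).trans (le_abs_self _)
  have hup : ∀ x, ‖D x‖ ≤ (⨆ i, d i) * ‖x‖ :=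
    norm_toEuclideanLin_diagonal_le
      fun i ↦ (abs_of_pos (hd i)).trans_le (le_ciSup (Finite.bddAbove_range d) i)
  subst hDg hDt
  calc angle s (D t) ≤ angle s (D g) + angle (D g) (D t) := angle_le_angle_add_angle _ _ _
    _ ≤ _ := add_le_add hsangle (angle_map_le_arccos (hi₀ ▸ hd i₀) hlow hup hρ₂ hg ht)

/-- Bound on the gradient estimation angle of the layer pre-activation: if `s` makes an
angle at most `arccos √r` with `d ⊙ g` (e.g. `s = S(d ⊙ g)` for a sparsifying function of
sparse ratio `r`), `d` has positive entries with `ρ₂ ≥ (d_max/d_min)²`, and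
`ρ₂ cos ∠(g,t) + 1 - ρ₂ > 0`, then
`∠(s, d ⊙ t) ≤ arccos √r + arccos(ρ₂ cos ∠(g,t) + 1 - ρ₂)`. -/
theorem sparse_bp_h_angle {m : ℕ} (g t : EuclideanSpace ℝ (Fin m))
    (hg : g ≠ 0) (ht : t ≠ 0)
    (d : Fin m → ℝ) (hd : ∀ i, 0 < d i) (ρ₂ : ℝ)
    (hρ₂ : ((⨆ i, d i) / (⨅ i, d i)) ^ 2 ≤ ρ₂)
    (r : ℝ) (hr0 : 0 < r) (hr1 : r ≤ 1)
    (hpos : 0 < ρ₂ * Real.cos (angle g t) + 1 - ρ₂)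
    (dg dt : EuclideanSpace ℝ (Fin m))
    (hdg : ∀ i, dg i = d i * g i) (hdt : ∀ i, dt i = d i * t i)
    (s : EuclideanSpace ℝ (Fin m)) (hs : s ≠ 0)
    (hsangle : angle s dg ≤ Real.arccos (Real.sqrt r)) :
    angle s dt ≤
      Real.arccos (Real.sqrt r) + Real.arccos (ρ₂ * Real.cos (angle g t) + 1 - ρ₂) :=
  sparse_bp_h_angle_general g t hg ht d hd ρ₂ hρ₂ r dg dt hdg hdt s hsangle
end

section
/- Let u_1, …, u_N and v_1, …, v_N be nonzero vectors with u_i, v_i ∈ ℝ^{n_i}, and set λ_i = ‖u_i‖/‖v_i‖. Let U = (u_1, …, u_N) and G = (λ_1 v_1, …, λ_N v_N) be their concatenations in ℝ^{n_1 + ⋯ + n_N}. Then ‖G‖ = ‖U‖ and cos ∠(G, U) ≥ min_{1 ≤ i ≤ N} cos ∠(v_i, u_i); equivalently, ∠(G, U) ≤ max_i ∠(v_i, u_i). -/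
open InnerProductGeometry
open scoped RealInnerProductSpace

/-!
Rescaling `v i` to the length of `u i` makes every block of `G` as long as the corresponding
block of `u`, so `‖G‖ = ‖u‖`, and turns `⟪G i, u i⟫` into `cos ∠(v i, u i) · ‖u i‖²`. Summing,
`⟪G, u⟫` is a convex combination of the blockwise cosines with weights `‖u i‖² / ‖u‖²`, hence at
least their minimum. Since `cos` is decreasing on `[0, π]`, the angle bound follows.
-/

section Blockwise

variable {ι : Type*} [Fintype ι] {E : ι → Type*}

theorem PiLp.norm_eq_of_forall_norm_eq [∀ i, SeminormedAddCommGroup (E i)] {x y : PiLp 2 E}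
    (h : ∀ i, ‖x i‖ = ‖y i‖) : ‖x‖ = ‖y‖ := by
  simp only [PiLp.norm_eq_of_L2, h]

theorem PiLp.mul_norm_sq_le_inner [∀ i, NormedAddCommGroup (E i)]
    [∀ i, InnerProductSpace ℝ (E i)] {c : ℝ} {x y : PiLp 2 E}
    (h : ∀ i, c * ‖y i‖ ^ 2 ≤ ⟪x i, y i⟫) : c * ‖y‖ ^ 2 ≤ ⟪x, y⟫ := by
  rw [PiLp.norm_sq_eq_of_L2, Finset.mul_sum, PiLp.inner_apply]
  exact Finset.sum_le_sum fun i _ => h i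

end Blockwise

namespace InnerProductGeometry

variable {F : Type*} [NormedAddCommGroup F] [InnerProductSpace ℝ F]

theorem norm_smul_div_norm (u : F) {v : F} (hv : v ≠ 0) : ‖(‖u‖ / ‖v‖) • v‖ = ‖u‖ := by
  rw [norm_smul, Real.norm_of_nonneg (by positivity), div_mul_cancel₀ _ (norm_ne_zero_iff.2 hv)]

theorem inner_smul_div_norm_left (u v : F) :
    ⟪(‖u‖ / ‖v‖) • v, u⟫ = Real.cos (angle v u) * ‖u‖ ^ 2 := by
  rw [real_inner_smul_left, cos_angle]
  rcases eq_or_ne u 0 with rfl | hu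
  · simp
  · field_simp

theorem le_cos_angle_of_mul_norm_sq_le_inner {c : ℝ} {x y : F} (hxy : ‖x‖ = ‖y‖) (hy : y ≠ 0)
    (h : c * ‖y‖ ^ 2 ≤ ⟪x, y⟫) : c ≤ Real.cos (angle x y) := by
  rw [cos_angle, hxy, le_div_iff₀ (by positivity), ← sq]
  exact h

theorem angle_le_of_cos_le_cos_angle {x y : F} {θ : ℝ} (hθ₀ : 0 ≤ θ) (hθπ : θ ≤ Real.pi)
    (h : Real.cos θ ≤ Real.cos (angle x y)) : angle x y ≤ θ :=
  (Real.strictAntiOn_cos.le_iff_ge ⟨hθ₀, hθπ⟩ ⟨angle_nonneg x y, angle_le_pi x y⟩).1 h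

end InnerProductGeometry

theorem Real.cos_ciSup_le_ciInf_cos {ι : Type*} [Finite ι] [Nonempty ι] {f : ι → ℝ}
    (hf₀ : ∀ i, 0 ≤ f i) (hfπ : ∀ i, f i ≤ Real.pi) :
    Real.cos (⨆ i, f i) ≤ ⨅ i, Real.cos (f i) :=
  le_ciInf fun i => Real.cos_le_cos_of_nonneg_of_le_pi (hf₀ i) (ciSup_le hfπ)
    (le_ciSup (Set.finite_range f).bddAbove i)

/-- Concatenating the rescaled per-layer estimated gradients `λ_i • v_i` with
`λ_i = ‖u_i‖/‖v_i‖` yields a vector `G` with `‖G‖ = ‖U‖`, whose angle with the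
concatenation `U` of the true per-layer gradients satisfies
`cos ∠(G, U) ≥ min_i cos ∠(v_i, u_i)`, i.e. `∠(G, U) ≤ max_i ∠(v_i, u_i)`. -/
theorem concat_rescaled_angle {N : ℕ} (hN : 0 < N) (n : Fin N → ℕ)
    (u v : PiLp 2 fun i : Fin N => EuclideanSpace ℝ (Fin (n i)))
    (hu : ∀ i, u i ≠ 0) (hv : ∀ i, v i ≠ 0)
    (G : PiLp 2 fun i : Fin N => EuclideanSpace ℝ (Fin (n i)))
    (hG : ∀ i, G i = (‖u i‖ / ‖v i‖) • v i) :
    ‖G‖ = ‖u‖ ∧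
    (⨅ i, Real.cos (angle (v i) (u i))) ≤ Real.cos (angle G u) ∧
    angle G u ≤ ⨆ i, angle (v i) (u i) := by
  have : Nonempty (Fin N) := ⟨⟨0, hN⟩⟩
  have hu₀ : u ≠ 0 := fun h => hu ⟨0, hN⟩ (by simp [h])
  have hnorm : ‖G‖ = ‖u‖ := PiLp.norm_eq_of_forall_norm_eq fun i => by
    rw [hG i, norm_smul_div_norm _ (hv i)]
  have hcos : (⨅ i, Real.cos (angle (v i) (u i))) ≤ Real.cos (angle G u) := by
    refine le_cos_angle_of_mul_norm_sq_le_inner hnorm hu₀ (PiLp.mul_norm_sq_le_inner fun i => ?_)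
    rw [hG i, inner_smul_div_norm_left]
    gcongr
    exact ciInf_le (Set.finite_range _).bddBelow i
  have hangle₀ (i : Fin N) : 0 ≤ angle (v i) (u i) := angle_nonneg _ _
  have hangleπ (i : Fin N) : angle (v i) (u i) ≤ Real.pi := angle_le_pi _ _
  exact ⟨hnorm, hcos, angle_le_of_cos_le_cos_angle (Real.iSup_nonneg hangle₀) (ciSup_le hangleπ)
    ((Real.cos_ciSup_le_ciInf_cos hangle₀ hangleπ).trans hcos)⟩
end

section
/- Let θ ∈ (0, π/2), and let u_1, …, u_n and v_1, …, v_n be nonzero vectors in ℝ^d with ‖u_i‖ = ‖v_i‖ and ∠(u_i, v_i) < θ for all i. Let ū = (1/n)·Σ_i u_i and v̄ = (1/n)·Σ_i v_i, assume ū ≠ 0 and v̄ ≠ 0, and set β = (Σ_{i=1}^n ‖u_i‖)/(n·‖ū‖) (note β ≥ 1). If cos θ − √(β² − 1)·sin θ > 0, then cos ∠(ū, v̄) > (cos θ − √(β² − 1)·sin θ) / (1 + 2β·sin(θ/2)). -/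
/-!
Put `U = ∑ uᵢ`, `W = ∑ vᵢ` (averaging does not change angles), `αᵢ = ∠(U, uᵢ)` and
`R = √(β² - 1)`, so that `∑ ‖uᵢ‖ cos αᵢ = ‖U‖` and `∑ ‖uᵢ‖ = β ‖U‖`. The triangle inequality for
angles gives `∠(U, vᵢ) ≤ αᵢ + θ`; together with the tangent-line bound `R sin α ≤ β - cos α` this
yields `R cos ∠(U, vᵢ) ≥ R cos θ cos αᵢ - sin θ (β - cos αᵢ)`, which is linear in `cos αᵢ`.
Summing with weights `‖U‖ ‖uᵢ‖` gives `⟪U, W⟫ ≥ ‖U‖² (cos θ - R sin θ)`. On the other side,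
`‖vᵢ - uᵢ‖ < 2 ‖uᵢ‖ sin (θ / 2)`, hence `‖W‖ < ‖U‖ (1 + 2 β sin (θ / 2))`.
-/

open InnerProductGeometry Real
open scoped RealInnerProductSpace

section

variable {V : Type*} [NormedAddCommGroup V] {ι : Type*} [Fintype ι] {u v : ι → V}

theorem one_le_of_sum_norm_eq_mul_norm_sum {β : ℝ} (hU : ∑ i, u i ≠ 0)
    (hβ : ∑ i, ‖u i‖ = β * ‖∑ i, u i‖) : 1 ≤ β := by
  refine le_of_mul_le_mul_right ?_ (norm_pos_iff.2 hU)
  rw [one_mul, ← hβ]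
  exact norm_sum_le _ _

variable [InnerProductSpace ℝ V]

theorem cos_angle_add_le_cos_angle (x y z : V) {θ : ℝ} (h : angle y z ≤ θ)
    (hπ : angle x y + θ ≤ π) : cos (angle x y + θ) ≤ cos (angle x z) :=
  cos_le_cos_of_nonneg_of_le_pi (angle_nonneg x z) hπ
    ((angle_le_angle_add_angle x y z).trans (by linarith))

theorem le_mul_cos_angle_of_angle_le (x y z : V) {θ R β : ℝ} (hθ0 : 0 ≤ θ) (hθ : θ ≤ π / 2)
    (hyz : angle y z ≤ θ) (hR : 0 ≤ R) (hβ0 : 0 ≤ β) (hRβ : R ^ 2 + 1 ≤ β ^ 2) :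
    R * cos θ * cos (angle x y) - sin θ * (β - cos (angle x y)) ≤ R * cos (angle x z) := by
  set α := angle x y
  have hsinθ : 0 ≤ sin θ := sin_nonneg_of_nonneg_of_le_pi hθ0 (by linarith [pi_pos])
  have hcosθ : 0 ≤ cos θ := cos_nonneg_of_mem_Icc ⟨by linarith [pi_pos], hθ⟩
  rcases le_or_gt (α + θ) π with hαθ | hαθ
  · -- `(R sin α + cos α)² ≤ (R² + 1)(sin² α + cos² α) ≤ β²`
    have hsinα : R * sin α ≤ β - cos α := by
      nlinarith [sq_nonneg (R * cos α - sin α), sin_sq_add_cos_sq α]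
    have h := cos_angle_add_le_cos_angle x y z hyz hαθ
    rw [cos_add] at h
    nlinarith [mul_le_mul_of_nonneg_left h hR, mul_le_mul_of_nonneg_right hsinα hsinθ]
  · -- Here the triangle inequality is useless, but `cos α ≤ -cos θ` and `cos ∠(x, z) ≥ -1` suffice.
    have hcosα : cos α ≤ -cos θ := by
      rw [← cos_pi_sub]
      exact cos_le_cos_of_nonneg_of_le_pi (by linarith) (angle_le_pi x y) (by linarith)
    have hRβ' : R ≤ β := by nlinarith
    nlinarith [mul_le_mul_of_nonneg_left (neg_one_le_cos (angle x z)) hR,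
      mul_le_mul_of_nonneg_right hcosα (by positivity : 0 ≤ R * cos θ + sin θ),
      mul_le_mul_of_nonneg_right hRβ' hsinθ, sin_sq_add_cos_sq θ,
      mul_nonneg hR (mul_nonneg hsinθ (sub_nonneg.2 (sin_le_one θ))), mul_nonneg hsinθ hcosθ]

theorem le_mul_inner_of_angle_le (x y z : V) {θ R β : ℝ} (hθ0 : 0 ≤ θ) (hθ : θ ≤ π / 2)
    (hyz : angle y z ≤ θ) (hnorm : ‖y‖ = ‖z‖) (hR : 0 ≤ R) (hβ0 : 0 ≤ β)
    (hRβ : R ^ 2 + 1 ≤ β ^ 2) :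
    R * cos θ * ⟪x, y⟫ - sin θ * (β * (‖x‖ * ‖y‖) - ⟪x, y⟫) ≤ R * ⟪x, z⟫ := by
  have h := mul_le_mul_of_nonneg_right (le_mul_cos_angle_of_angle_le x y z hθ0 hθ hyz hR hβ0 hRβ)
    (by positivity : 0 ≤ ‖x‖ * ‖y‖)
  rw [← cos_angle_mul_norm_mul_norm x y, ← cos_angle_mul_norm_mul_norm x z, ← hnorm]
  linear_combination h

theorem norm_sub_lt_of_angle_lt {y z : V} {θ : ℝ} (hy : y ≠ 0) (hθ : θ ≤ π) (hyz : angle y z < θ)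
    (hnorm : ‖y‖ = ‖z‖) : ‖z - y‖ < 2 * ‖y‖ * sin (θ / 2) := by
  have hcos : cos θ < cos (angle y z) :=
    cos_lt_cos_of_nonneg_of_le_pi (angle_nonneg y z) hθ hyz
  have hsq : ‖z - y‖ ^ 2 = 2 * ‖y‖ ^ 2 * (1 - cos (angle y z)) := by
    rw [norm_sub_rev, sq,
      norm_sub_sq_eq_norm_sq_add_norm_sq_sub_two_mul_norm_mul_norm_mul_cos_angle, ← hnorm]
    ring
  have hhalf : cos θ = 1 - 2 * sin (θ / 2) ^ 2 := by
    rw [← cos_two_mul_eq_one_sub]; ring_nf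
  have hy' : 0 < ‖y‖ := norm_pos_iff.2 hy
  refine lt_of_pow_lt_pow_left₀ 2 ?_ ?_
  · have : 0 ≤ sin (θ / 2) := sin_nonneg_of_nonneg_of_le_pi (by linarith [angle_nonneg y z])
      (by linarith [pi_pos])
    positivity
  · rw [hsq]; nlinarith [mul_pos hy' hy']

theorem angle_sum_eq_zero_of_sum_norm_eq (hu : ∀ i, u i ≠ 0) (hU : ∑ i, u i ≠ 0)
    (h : ∑ i, ‖u i‖ = ‖∑ i, u i‖) (i : ι) : angle (∑ j, u j) (u i) = 0 := by
  set U := ∑ j, u j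
  have hgap : ∑ j, (‖U‖ * ‖u j‖ - ⟪U, u j⟫) = 0 := by
    rw [Finset.sum_sub_distrib, ← Finset.mul_sum, ← inner_sum, h, real_inner_self_eq_norm_mul_norm,
      sub_self]
  rw [Finset.sum_eq_zero_iff_of_nonneg fun j _ => sub_nonneg.2 (real_inner_le_norm U (u j))] at hgap
  exact (inner_eq_mul_norm_iff_angle_eq_zero hU (hu i)).1
    (sub_eq_zero.1 (hgap i (Finset.mem_univ i))).symm

theorem sq_norm_sum_mul_le_inner_sum {θ β : ℝ} (hθ0 : 0 ≤ θ) (hθ : θ ≤ π / 2)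
    (hu : ∀ i, u i ≠ 0) (hnorm : ∀ i, ‖u i‖ = ‖v i‖) (hangle : ∀ i, angle (u i) (v i) ≤ θ)
    (hU : ∑ i, u i ≠ 0) (hβ : ∑ i, ‖u i‖ = β * ‖∑ i, u i‖) :
    ‖∑ i, u i‖ ^ 2 * (cos θ - √(β ^ 2 - 1) * sin θ) ≤ ⟪∑ i, u i, ∑ i, v i⟫ := by
  set U := ∑ i, u i with hUdef
  set R := √(β ^ 2 - 1)
  have hβ1 := one_le_of_sum_norm_eq_mul_norm_sum hU hβ
  have hR2 : R ^ 2 = β ^ 2 - 1 := sq_sqrt (by nlinarith)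
  have hR : 0 ≤ R := sqrt_nonneg _
  rcases hR.eq_or_lt with hR0 | hRpos
  · have hβ1' : β = 1 := by nlinarith
    rw [hβ1', one_mul] at hβ
    have hper : ∀ i, cos θ * (‖U‖ * ‖u i‖) ≤ ⟪U, v i⟫ := by
      intro i
      have h0 := angle_sum_eq_zero_of_sum_norm_eq hu hU hβ i
      have h := cos_angle_add_le_cos_angle U (u i) (v i) (hangle i) (by rw [h0]; linarith [pi_pos])
      rw [h0, zero_add] at h
      rw [← cos_angle_mul_norm_mul_norm U (v i), hnorm i]
      exact mul_le_mul_of_nonneg_right h (by positivity)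
    have hsum := Finset.sum_le_sum fun i (_ : i ∈ Finset.univ) => hper i
    rw [← Finset.mul_sum, ← Finset.mul_sum, ← inner_sum, hβ] at hsum
    rw [← hR0]
    linear_combination hsum
  · have hsum := Finset.sum_le_sum fun i (_ : i ∈ Finset.univ) =>
      le_mul_inner_of_angle_le (β := β) U (u i) (v i) hθ0 hθ (hangle i) (hnorm i) hRpos.le
        (by linarith) (by linarith)
    simp only [Finset.sum_sub_distrib, ← Finset.mul_sum, ← inner_sum, ← hUdef,
      real_inner_self_eq_norm_sq, hβ] at hsum
    refine le_of_mul_le_mul_left ?_ hRpos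
    linear_combination hsum - sin θ * ‖U‖ ^ 2 * hR2

theorem norm_sum_lt_norm_sum_mul {θ β : ℝ} (hθ : θ ≤ π) (hu : ∀ i, u i ≠ 0)
    (hnorm : ∀ i, ‖u i‖ = ‖v i‖) (hangle : ∀ i, angle (u i) (v i) < θ) (hU : ∑ i, u i ≠ 0)
    (hβ : ∑ i, ‖u i‖ = β * ‖∑ i, u i‖) :
    ‖∑ i, v i‖ < ‖∑ i, u i‖ * (1 + 2 * β * sin (θ / 2)) :=
  calc ‖∑ i, v i‖ ≤ ‖∑ i, u i‖ + ‖∑ i, (v i - u i)‖ := by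
        rw [Finset.sum_sub_distrib]; exact norm_le_norm_add_norm_sub' _ _
    _ ≤ ‖∑ i, u i‖ + ∑ i, ‖v i - u i‖ := by gcongr; exact norm_sum_le _ _
    _ < ‖∑ i, u i‖ + ∑ i, 2 * ‖u i‖ * sin (θ / 2) :=
        add_lt_add_right (Finset.sum_lt_sum_of_nonempty (Finset.nonempty_of_sum_ne_zero hU)
          fun i _ => norm_sub_lt_of_angle_lt (hu i) hθ (hangle i) (hnorm i)) _
    _ = ‖∑ i, u i‖ * (1 + 2 * β * sin (θ / 2)) := by
        rw [← Finset.sum_mul, ← Finset.mul_sum, hβ]; ring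

theorem lt_cos_angle_sum_sum {θ β : ℝ} (hθ0 : 0 < θ) (hθ : θ < π / 2)
    (hu : ∀ i, u i ≠ 0) (hnorm : ∀ i, ‖u i‖ = ‖v i‖) (hangle : ∀ i, angle (u i) (v i) < θ)
    (hU : ∑ i, u i ≠ 0) (hV : ∑ i, v i ≠ 0) (hβ : ∑ i, ‖u i‖ = β * ‖∑ i, u i‖)
    (hpos : 0 < cos θ - √(β ^ 2 - 1) * sin θ) :
    (cos θ - √(β ^ 2 - 1) * sin θ) / (1 + 2 * β * sin (θ / 2)) <
      cos (angle (∑ i, u i) (∑ i, v i)) := by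
  have hsin : 0 ≤ sin (θ / 2) := sin_nonneg_of_nonneg_of_le_pi (by linarith) (by linarith)
  have hD : 0 < 1 + 2 * β * sin (θ / 2) := by
    have := one_le_of_sum_norm_eq_mul_norm_sum hU hβ
    positivity
  have hUpos := norm_pos_iff.2 hU
  rw [cos_angle, div_lt_div_iff₀ hD (mul_pos hUpos (norm_pos_iff.2 hV))]
  calc (cos θ - √(β ^ 2 - 1) * sin θ) * (‖∑ i, u i‖ * ‖∑ i, v i‖)
      < (cos θ - √(β ^ 2 - 1) * sin θ) *
          (‖∑ i, u i‖ * (‖∑ i, u i‖ * (1 + 2 * β * sin (θ / 2)))) := by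
        gcongr
        exact norm_sum_lt_norm_sum_mul (by linarith) hu hnorm hangle hU hβ
    _ = ‖∑ i, u i‖ ^ 2 * (cos θ - √(β ^ 2 - 1) * sin θ) * (1 + 2 * β * sin (θ / 2)) := by ring
    _ ≤ ⟪∑ i, u i, ∑ i, v i⟫ * (1 + 2 * β * sin (θ / 2)) := by
        gcongr
        exact sq_norm_sum_mul_le_inner_sum hθ0.le hθ.le hu hnorm (fun i => (hangle i).le) hU hβ

end

theorem cos_angle_avg_lower_bound_general {d : ℕ} (n : ℕ) (θ : ℝ)
    (hθ0 : 0 < θ) (hθ : θ < Real.pi / 2)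
    (u v : Fin n → EuclideanSpace ℝ (Fin d))
    (hu : ∀ i, u i ≠ 0)
    (hnorm : ∀ i, ‖u i‖ = ‖v i‖) (hangle : ∀ i, angle (u i) (v i) < θ)
    (ubar vbar : EuclideanSpace ℝ (Fin d))
    (hubar : ubar = (n : ℝ)⁻¹ • ∑ i, u i) (hvbar : vbar = (n : ℝ)⁻¹ • ∑ i, v i)
    (hub : ubar ≠ 0) (hvb : vbar ≠ 0)
    (β : ℝ) (hβ : β = (∑ i, ‖u i‖) / ((n : ℝ) * ‖ubar‖))
    (hpos : 0 < Real.cos θ - Real.sqrt (β ^ 2 - 1) * Real.sin θ) :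
    (Real.cos θ - Real.sqrt (β ^ 2 - 1) * Real.sin θ) / (1 + 2 * β * Real.sin (θ / 2)) <
      Real.cos (angle ubar vbar) := by
  subst hubar hvbar
  have hn : (0 : ℝ) < n := by
    rcases n.eq_zero_or_pos with rfl | hn
    · simp at hub
    · exact_mod_cast hn
  have hU : ∑ i, u i ≠ 0 := right_ne_zero_of_smul hub
  rw [angle_smul_left_of_pos _ _ (inv_pos.2 hn), angle_smul_right_of_pos _ _ (inv_pos.2 hn)]
  refine lt_cos_angle_sum_sum hθ0 hθ hu hnorm hangle hU (right_ne_zero_of_smul hvb) ?_ hpos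
  rw [hβ, norm_smul, norm_inv, Real.norm_natCast, mul_inv_cancel_left₀ hn.ne',
    div_mul_cancel₀ _ (norm_ne_zero_iff.2 hU)]

/-- Lower bound on the cosine of the angle between averaged true and (rescaled)
estimated gradients: if `‖u_i‖ = ‖v_i‖`, `∠(u_i, v_i) < θ` for all `i`,
`β = (∑ ‖u_i‖)/(n ‖ū‖)` and `cos θ - √(β²-1) sin θ > 0`, then
`cos ∠(ū, v̄) > (cos θ - √(β²-1) sin θ) / (1 + 2 β sin(θ/2))`. -/
theorem cos_angle_avg_lower_bound {d : ℕ} (n : ℕ) (θ : ℝ)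
    (hθ0 : 0 < θ) (hθ : θ < Real.pi / 2)
    (u v : Fin n → EuclideanSpace ℝ (Fin d))
    (hu : ∀ i, u i ≠ 0) (hv : ∀ i, v i ≠ 0)
    (hnorm : ∀ i, ‖u i‖ = ‖v i‖) (hangle : ∀ i, angle (u i) (v i) < θ)
    (ubar vbar : EuclideanSpace ℝ (Fin d))
    (hubar : ubar = (n : ℝ)⁻¹ • ∑ i, u i) (hvbar : vbar = (n : ℝ)⁻¹ • ∑ i, v i)
    (hub : ubar ≠ 0) (hvb : vbar ≠ 0)
    (β : ℝ) (hβ : β = (∑ i, ‖u i‖) / ((n : ℝ) * ‖ubar‖))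
    (hpos : 0 < Real.cos θ - Real.sqrt (β ^ 2 - 1) * Real.sin θ) :
    (Real.cos θ - Real.sqrt (β ^ 2 - 1) * Real.sin θ) / (1 + 2 * β * Real.sin (θ / 2)) <
      Real.cos (angle ubar vbar) :=
  cos_angle_avg_lower_bound_general n θ hθ0 hθ u v hu hnorm hangle ubar vbar hubar hvbar hub hvb β
    hβ hpos
end

section
/- Let ℓ : ℝ^n → ℝ be differentiable, μ-strongly convex and L-smooth with 0 < μ ≤ L, and let w* be its global minimizer. Then for every w ≠ w*, the gradient ∇ℓ(w) is nonzero and cos ∠(∇ℓ(w), w − w*) ≥ √(μ/L); equivalently, ∠(∇ℓ(w), w − w*) ≤ arccos√(μ/L), the convex-smooth angle of ℓ. -/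
/-!
Write `g = ∇ℓ(w)` and `x = w - w*`. Strong convexity between `w` and `w*` gives
`ℓ(w) - ℓ(w*) + μ‖x‖²/2 ≤ ⟪g, x⟫`, and `L`-smoothness along the gradient step
`w - g/L`, together with minimality of `w*`, gives `‖g‖²/(2L) ≤ ℓ(w) - ℓ(w*)`.
Hence `‖g‖²/(2L) + μ‖x‖²/2 ≤ ⟪g, x⟫`, and by AM-GM the left side is at least
`√(μ/L) ‖g‖ ‖x‖`, which is the cosine bound.
-/

open InnerProductGeometry RealInnerProductSpace

lemma sqrt_div_mul_mul_le_sq_div_add {μ L : ℝ} (hμ : 0 ≤ μ) (hL : 0 < L) (a b : ℝ) :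
    √(μ / L) * a * b ≤ a ^ 2 / (2 * L) + μ / 2 * b ^ 2 := by
  set s := √(μ / L)
  have hμ_eq : μ = L * s ^ 2 := by
    rw [Real.sq_sqrt (by positivity)]
    field_simp
  rw [hμ_eq, div_add' _ _ _ (by positivity), le_div_iff₀ (by positivity)]
  nlinarith [sq_nonneg (a - L * s * b)]

section InnerProductSpace

variable {E : Type*} [NormedAddCommGroup E] [InnerProductSpace ℝ E]

lemma le_cos_angle_of_mul_norm_mul_norm_le_inner {s : ℝ} {x y : E} (hx : x ≠ 0) (hy : y ≠ 0)
    (h : s * ‖x‖ * ‖y‖ ≤ ⟪x, y⟫) : s ≤ Real.cos (angle x y) := by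
  rw [cos_angle, le_div_iff₀ (by positivity), ← mul_assoc]
  exact h

lemma angle_le_arccos_of_le_cos_angle {s : ℝ} {x y : E} (h : s ≤ Real.cos (angle x y)) :
    angle x y ≤ Real.arccos s := by
  calc angle x y = Real.arccos (Real.cos (angle x y)) :=
        (Real.arccos_cos (angle_nonneg x y) (angle_le_pi x y)).symm
    _ ≤ Real.arccos s := Real.arccos_le_arccos h

lemma sq_norm_div_le_sub_of_smooth_of_isMin {ℓ : E → ℝ} {L : ℝ} (hL : 0 < L) {w g y : E}
    (hsm : ∀ b, ℓ b ≤ ℓ w + ⟪g, b - w⟫ + L / 2 * ‖b - w‖ ^ 2) (hmin : ∀ b, ℓ y ≤ ℓ b) :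
    ‖g‖ ^ 2 / (2 * L) ≤ ℓ w - ℓ y := by
  have hstep := hsm (w - L⁻¹ • g)
  rw [sub_sub_cancel_left, inner_neg_right, real_inner_smul_right, real_inner_self_eq_norm_sq,
    norm_neg, norm_smul, Real.norm_eq_abs, abs_of_pos (inv_pos.mpr hL)] at hstep
  have hdecr : ℓ w + -(L⁻¹ * ‖g‖ ^ 2) + L / 2 * (L⁻¹ * ‖g‖) ^ 2 = ℓ w - ‖g‖ ^ 2 / (2 * L) := by
    field_simp
    ring
  linarith [hmin (w - L⁻¹ • g)]

lemma sq_norm_div_add_sq_norm_le_inner {ℓ : E → ℝ} {μ L : ℝ} (hL : 0 < L) {w g y : E}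
    (hsc : ℓ w + ⟪g, y - w⟫ + μ / 2 * ‖y - w‖ ^ 2 ≤ ℓ y)
    (hsm : ∀ b, ℓ b ≤ ℓ w + ⟪g, b - w⟫ + L / 2 * ‖b - w‖ ^ 2) (hmin : ∀ b, ℓ y ≤ ℓ b) :
    ‖g‖ ^ 2 / (2 * L) + μ / 2 * ‖w - y‖ ^ 2 ≤ ⟪g, w - y⟫ := by
  rw [← neg_sub w y, inner_neg_right, norm_neg] at hsc
  linarith [sq_norm_div_le_sub_of_smooth_of_isMin hL hsm hmin]

end InnerProductSpace

theorem grad_angle_le_convex_smooth_angle_general {n : ℕ} (ℓ : EuclideanSpace ℝ (Fin n) → ℝ)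
    (μ L : ℝ) (hμ : 0 < μ) (hμL : μ ≤ L)
    (hsc : ∀ a b : EuclideanSpace ℝ (Fin n),
      ℓ a + ⟪gradient ℓ a, b - a⟫ + μ / 2 * ‖b - a‖ ^ 2 ≤ ℓ b)
    (hsm : ∀ a b : EuclideanSpace ℝ (Fin n),
      ℓ b ≤ ℓ a + ⟪gradient ℓ a, b - a⟫ + L / 2 * ‖b - a‖ ^ 2)
    (wstar : EuclideanSpace ℝ (Fin n)) (hmin : ∀ w, ℓ wstar ≤ ℓ w)
    (w : EuclideanSpace ℝ (Fin n)) (hw : w ≠ wstar) :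
    gradient ℓ w ≠ 0 ∧
    Real.sqrt (μ / L) ≤ Real.cos (angle (gradient ℓ w) (w - wstar)) ∧
    angle (gradient ℓ w) (w - wstar) ≤ Real.arccos (Real.sqrt (μ / L)) := by
  have hL : 0 < L := hμ.trans_le hμL
  have hx : w - wstar ≠ 0 := sub_ne_zero.mpr hw
  have hlow := sq_norm_div_add_sq_norm_le_inner hL (hsc w wstar) (hsm w) hmin
  have hg : gradient ℓ w ≠ 0 := by
    intro hg
    rw [hg, norm_zero, inner_zero_left, sq, zero_mul, zero_div, zero_add] at hlow
    have : 0 < μ / 2 * ‖w - wstar‖ ^ 2 := by positivity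
    linarith
  have hcos := le_cos_angle_of_mul_norm_mul_norm_le_inner hg hx
    ((sqrt_div_mul_mul_le_sq_div_add hμ.le hL _ _).trans hlow)
  exact ⟨hg, hcos, angle_le_arccos_of_le_cos_angle hcos⟩

/-- For a differentiable, `μ`-strongly convex and `L`-smooth function with global
minimizer `w*`, for every `w ≠ w*` the gradient is nonzero and
`cos ∠(∇ℓ(w), w - w*) ≥ √(μ/L)`, equivalently
`∠(∇ℓ(w), w - w*) ≤ arccos √(μ/L)` (the convex-smooth angle). -/
theorem grad_angle_le_convex_smooth_angle {n : ℕ} (ℓ : EuclideanSpace ℝ (Fin n) → ℝ)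
    (μ L : ℝ) (hμ : 0 < μ) (hμL : μ ≤ L)
    (hdiff : Differentiable ℝ ℓ)
    (hsc : ∀ a b : EuclideanSpace ℝ (Fin n),
      ℓ a + ⟪gradient ℓ a, b - a⟫ + μ / 2 * ‖b - a‖ ^ 2 ≤ ℓ b)
    (hsm : ∀ a b : EuclideanSpace ℝ (Fin n),
      ℓ b ≤ ℓ a + ⟪gradient ℓ a, b - a⟫ + L / 2 * ‖b - a‖ ^ 2)
    (wstar : EuclideanSpace ℝ (Fin n)) (hmin : ∀ w, ℓ wstar ≤ ℓ w)
    (w : EuclideanSpace ℝ (Fin n)) (hw : w ≠ wstar) :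
    gradient ℓ w ≠ 0 ∧
    Real.sqrt (μ / L) ≤ Real.cos (angle (gradient ℓ w) (w - wstar)) ∧
    angle (gradient ℓ w) (w - wstar) ≤ Real.arccos (Real.sqrt (μ / L)) :=
  grad_angle_le_convex_smooth_angle_general ℓ μ L hμ hμL hsc hsm wstar hmin w hw
end

section
/- Let w, w* ∈ ℝ^n with w ≠ w*, let g ∈ ℝ^n be nonzero, and let θ ∈ [0, π/2) satisfy cos ∠(g, w − w*) ≥ cos θ. Then for the learning rate η = cos θ·‖w − w*‖/‖g‖, the update satisfies ‖(w − η·g) − w*‖ ≤ sin θ·‖w − w*‖. -/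
open InnerProductGeometry Real
open scoped RealInnerProductSpace

section

variable {E : Type*} [NormedAddCommGroup E] [InnerProductSpace ℝ E]

/-- With `η = c‖x‖/‖g‖` the step `η • g` has length `c‖x‖`, and its component along `x` is at
least `c²‖x‖`; the law of cosines then leaves at most `(1 - c²)‖x‖²`. -/
theorem norm_sub_smul_sq_le_of_mul_norm_le_inner {x g : E} {c : ℝ} (hg : g ≠ 0) (hc : 0 ≤ c)
    (hinner : c * (‖g‖ * ‖x‖) ≤ ⟪g, x⟫) :
    ‖x - (c * ‖x‖ / ‖g‖) • g‖ ^ 2 ≤ (1 - c ^ 2) * ‖x‖ ^ 2 := by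
  set η := c * ‖x‖ / ‖g‖
  have hη : 0 ≤ η := by positivity
  have hηg : η * ‖g‖ = c * ‖x‖ := div_mul_cancel₀ _ (norm_ne_zero_iff.mpr hg)
  calc ‖x - η • g‖ ^ 2 = ‖x‖ ^ 2 - 2 * (η * ⟪g, x⟫) + (η * ‖g‖) ^ 2 := by
        rw [norm_sub_sq_real, real_inner_smul_right, real_inner_comm, norm_smul,
          Real.norm_of_nonneg hη]
    _ ≤ ‖x‖ ^ 2 - 2 * (η * (c * (‖g‖ * ‖x‖))) + (η * ‖g‖) ^ 2 := by gcongr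
    _ = (1 - c ^ 2) * ‖x‖ ^ 2 := by linear_combination (η * ‖g‖ - c * ‖x‖) * hηg

theorem norm_sub_smul_le_sin_mul_norm_of_cos_le_cos_angle {x g : E} {θ : ℝ} (hθ0 : 0 ≤ θ)
    (hθ : θ < π / 2) (hangle : cos θ ≤ cos (angle g x)) :
    ‖x - (cos θ * ‖x‖ / ‖g‖) • g‖ ≤ sin θ * ‖x‖ := by
  have hcos : 0 < cos θ := cos_pos_of_mem_Ioo ⟨by linarith [pi_pos], hθ⟩
  have hsin : 0 ≤ sin θ := sin_nonneg_of_nonneg_of_le_pi hθ0 (by linarith [pi_pos])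
  have hg : g ≠ 0 := by
    rintro rfl
    rw [angle_zero_left, cos_pi_div_two] at hangle
    linarith
  have hinner : cos θ * (‖g‖ * ‖x‖) ≤ ⟪g, x⟫ :=
    cos_angle_mul_norm_mul_norm g x ▸ mul_le_mul_of_nonneg_right hangle (by positivity)
  rw [← pow_le_pow_iff_left₀ (norm_nonneg _) (by positivity) two_ne_zero, mul_pow, sin_sq]
  exact norm_sub_smul_sq_le_of_mul_norm_le_inner hg hcos.le hinner

end

theorem one_step_geometric_contraction_general {n : ℕ} (w wstar g : EuclideanSpace ℝ (Fin n))
    (θ : ℝ) (hθ0 : 0 ≤ θ) (hθ : θ < Real.pi / 2)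
    (hangle : Real.cos θ ≤ Real.cos (angle g (w - wstar))) :
    ‖w - (Real.cos θ * ‖w - wstar‖ / ‖g‖) • g - wstar‖ ≤ Real.sin θ * ‖w - wstar‖ := by
  rw [sub_right_comm]
  exact norm_sub_smul_le_sin_mul_norm_of_cos_le_cos_angle hθ0 hθ hangle

/-- Geometric one-step contraction: if `cos ∠(g, w - w*) ≥ cos θ` with
`θ ∈ [0, π/2)`, then the update with learning rate `η = cos θ · ‖w - w*‖ / ‖g‖`
satisfies `‖(w - η • g) - w*‖ ≤ sin θ · ‖w - w*‖`. -/
theorem one_step_geometric_contraction {n : ℕ} (w wstar g : EuclideanSpace ℝ (Fin n))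
    (hw : w ≠ wstar) (hg : g ≠ 0) (θ : ℝ) (hθ0 : 0 ≤ θ) (hθ : θ < Real.pi / 2)
    (hangle : Real.cos θ ≤ Real.cos (angle g (w - wstar))) :
    ‖w - (Real.cos θ * ‖w - wstar‖ / ‖g‖) • g - wstar‖ ≤ Real.sin θ * ‖w - wstar‖ :=
  one_step_geometric_contraction_general w wstar g θ hθ0 hθ hangle
end
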